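/- For every integer k ≥ 1 there exists a polynomial p_k ∈ ℚ[T] such that 𝒵_k = p_k(L) as formal power series in ℚ[[q]]; that is, every generator 𝒵_k can be written as a polynomial with rational coefficients in L. -/

import Mathlib

noncomputable section

/-- The operator `q·d/dq` on formal power series in `q`. -/
def qd (f : PowerSeries ℚ) : PowerSeries ℚ :=
  PowerSeries.mk fun n => (n : ℚ) * PowerSeries.coeff n f

/-- The operator `d/du = (1/L)·q·d/dq`. -/
def du (L f : PowerSeries ℚ) : PowerSeries ℚ := L⁻¹ * qd f

/-- The generators `𝒵_k`: `𝒵₁ = (1/L)(q L'/L + 1/5)` and `𝒵_{k+1} = (d/du) 𝒵_k`. -/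
def Zg (L : PowerSeries ℚ) : ℕ → PowerSeries ℚ
  | 0 => 0
  | 1 => L⁻¹ * (qd L * L⁻¹ + PowerSeries.C (1 / 5 : ℚ))
  | (k + 2) => du L (Zg L (k + 1))

/-!
Differentiating `Lⁿ(1 - cq) = 1` gives the Riccati-type equation `n·q L' = L^{n+1} - L`, so
`d/du L = (Lⁿ - 1)/n` is a polynomial in `L`. Since `d/du` is a derivation, it maps `p(L)` to
`p'(L)·(Lⁿ - 1)/n`, and the polynomials in `L` are closed under `d/du`. For `n = 5` the
constant `1/5` in `𝒵₁` is exactly what cancels, leaving `𝒵₁ = L⁴/5`.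
-/

open PowerSeries

lemma qd_eq_smul_derivative (f : PowerSeries ℚ) : qd f = ((X : PowerSeries ℚ) • d⁄dX ℚ) f := by
  ext n
  cases n with
  | zero => simp [qd]
  | succ n =>
    rw [Derivation.smul_apply, smul_eq_mul, qd, coeff_mk, coeff_succ_X_mul, coeff_derivative]
    push_cast
    ring

lemma qd_aeval (L : PowerSeries ℚ) (p : Polynomial ℚ) :
    qd (Polynomial.aeval L p) = Polynomial.aeval L (Polynomial.derivative p) * qd L := by
  simp only [qd_eq_smul_derivative, Derivation.map_aeval, smul_eq_mul]

section

variable {L : PowerSeries ℚ} {n : ℕ} {c : ℚ}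

lemma natCast_mul_qd_of_pow_mul_eq_one (hL : L ^ n * (1 - C c * X) = 1) :
    (n : PowerSeries ℚ) * qd L = L ^ (n + 1) - L := by
  cases n with
  | zero => simp
  | succ m =>
    have hdiff : qd (L ^ (m + 1) * (1 - C c * X)) = 0 := by
      rw [hL, qd_eq_smul_derivative, Derivation.map_one_eq_zero]
    simp only [qd_eq_smul_derivative, Derivation.leibniz, Derivation.leibniz_pow,
      Nat.add_sub_cancel, map_sub, Derivation.map_one_eq_zero, derivative_C, derivative_X,
      Derivation.smul_apply, smul_eq_mul, nsmul_eq_mul] at hdiff ⊢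
    linear_combination L * hdiff + (-((m + 1 : ℕ) : PowerSeries ℚ) * (X * d⁄dX ℚ L) - L) * hL

lemma constantCoeff_ne_zero_of_pow_mul_eq_one (hn : n ≠ 0) (hL : L ^ n * (1 - C c * X) = 1) :
    constantCoeff L ≠ 0 := by
  intro h0
  have := congrArg constantCoeff hL
  simp [h0, zero_pow hn] at this

lemma inv_mul_qd_of_pow_mul_eq_one (hn : n ≠ 0) (hL : L ^ n * (1 - C c * X) = 1) :
    L⁻¹ * qd L = C (1 / n : ℚ) * (L ^ n - 1) := by
  have hinv := PowerSeries.inv_mul_cancel L (constantCoeff_ne_zero_of_pow_mul_eq_one hn hL)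
  have hn' : C (1 / n : ℚ) * (n : PowerSeries ℚ) = 1 := by
    rw [← map_natCast C, ← map_mul, one_div_mul_cancel (by exact_mod_cast hn), map_one]
  calc L⁻¹ * qd L = C (1 / n : ℚ) * L⁻¹ * (n * qd L) := by
        linear_combination (-(L⁻¹ * qd L)) * hn'
    _ = C (1 / n : ℚ) * (L ^ n - 1) := by
      rw [natCast_mul_qd_of_pow_mul_eq_one hL]
      linear_combination C (1 / n : ℚ) * (L ^ n - 1) * hinv

lemma du_aeval_of_pow_mul_eq_one (hn : n ≠ 0) (hL : L ^ n * (1 - C c * X) = 1)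
    (p : Polynomial ℚ) :
    du L (Polynomial.aeval L p) = Polynomial.aeval L
      (Polynomial.derivative p * (Polynomial.C (1 / n : ℚ) * (Polynomial.X ^ n - 1))) := by
  rw [du, qd_aeval, mul_left_comm, inv_mul_qd_of_pow_mul_eq_one hn hL]
  simp [Polynomial.aeval_C]

end

lemma Zg_one_of_pow_five_mul_eq_one {L : PowerSeries ℚ} {c : ℚ}
    (hL : L ^ 5 * (1 - C c * X) = 1) :
    Zg L 1 = Polynomial.aeval L (Polynomial.C (1 / 5 : ℚ) * Polynomial.X ^ 4) := by
  have hinv :=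
    PowerSeries.inv_mul_cancel L (constantCoeff_ne_zero_of_pow_mul_eq_one (by norm_num) hL)
  have hqd := inv_mul_qd_of_pow_mul_eq_one (by norm_num) hL
  simp only [Zg, map_mul, Polynomial.aeval_C, map_pow, Polynomial.aeval_X,
    PowerSeries.algebraMap_apply, Algebra.algebraMap_self, RingHom.id_apply]
  push_cast at hqd
  linear_combination L⁻¹ * hqd + C (1 / 5 : ℚ) * L ^ 4 * hinv

theorem statement9_general (L : PowerSeries ℚ)
    (hL : L ^ 5 * (1 - 5 ^ 5 * PowerSeries.X) = 1) :
    ∀ k : ℕ, 1 ≤ k → ∃ p : Polynomial ℚ, Zg L k = Polynomial.aeval L p := by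
  have hL' : L ^ 5 * (1 - C (5 ^ 5 : ℚ) * X) = 1 := by rw [map_pow, map_ofNat]; exact hL
  intro k hk
  induction k, hk using Nat.le_induction with
  | base => exact ⟨_, Zg_one_of_pow_five_mul_eq_one hL'⟩
  | succ k hk ih =>
    obtain ⟨p, hp⟩ := ih
    obtain ⟨m, rfl⟩ := Nat.exists_eq_add_of_le' hk
    exact ⟨_, by rw [Zg, hp, du_aeval_of_pow_mul_eq_one (by norm_num) hL']⟩

/-- Every generator `𝒵_k`, `k ≥ 1`, is a polynomial with rational
coefficients in `L = (1 - 5⁵q)^{-1/5}`. -/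
theorem statement9 (L : PowerSeries ℚ)
    (hc : PowerSeries.constantCoeff L = 1)
    (hL : L ^ 5 * (1 - 5 ^ 5 * PowerSeries.X) = 1) :
    ∀ k : ℕ, 1 ≤ k → ∃ p : Polynomial ℚ, Zg L k = Polynomial.aeval L p :=
  statement9_general L hL

end
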